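/- For every real β > 1 and every positive integer n, the von Mangoldt function satisfies the integral representation Λ(n) = n^β ∫_{𝕋^ω} (∑_{m=1}^∞ m^{−β} (log m) t^{α(m)}) / (∑_{m=1}^∞ m^{−β} t^{α(m)}) · t^{-α(n)} dt. -/

import Mathlib

/-!
For fixed `t`, `χ_t(n) = t^{α(n)}` is completely multiplicative with `|χ_t| = 1`. Twisting
`Λ * 1 = log` by `χ_t` shows that the quotient of the two series is `L(χ_t Λ, β)`; the
denominator `L(χ_t, β)` does not vanish because `L(χ_t μ, β)` is its inverse. Expanding
`L(χ_t Λ, β) t^{-α(n)}` and integrating termwise, the characters `t ↦ t^{α(m)}` are orthonormal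
for Haar measure (distinct `m` have distinct exponent vectors, and a nontrivial character
integrates to zero by translation invariance), so only `Λ(n) n^{-β}` survives.
-/

open MeasureTheory Filter Finset

noncomputable section

instance : MeasurableSpace Circle := borel Circle
instance : BorelSpace Circle := ⟨rfl⟩

/-- The infinite-dimensional torus `𝕋^ω`, a countable product of unit circles. -/
abbrev Torus : Type := ℕ → Circle

/-- `pprime j` is the `j`-th prime (`0`-indexed, so `pprime 0 = 2`). -/
def pprime (j : ℕ) : ℕ := Nat.nth Nat.Prime j

/-- `expOf n j` is `α_j(n)`, the exponent of the `j`-th prime in the factorization of `n`. -/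
def expOf (n j : ℕ) : ℕ := n.factorization (pprime j)

/-- `tpow t n = t^{α(n)} = ∏_j t_j^{α_j(n)}`, a finite product. -/
def tpow (t : Torus) (n : ℕ) : ℂ := ∏ᶠ j, ((t j : ℂ) ^ expOf n j)

open Complex LSeries ArithmeticFunction
open scoped LSeries.notation

section Twist

open scoped ArithmeticFunction.Moebius

variable {χ : ℕ → ℂ}

lemma LSeries.mul_convolution_distrib_of_map_mul
    (hχ : ∀ {a b : ℕ}, a ≠ 0 → b ≠ 0 → χ (a * b) = χ a * χ b) (f g : ℕ → ℂ) :
    (χ * f) ⍟ (χ * g) = χ * (f ⍟ g) := by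
  ext n
  simp only [Pi.mul_apply, convolution_def, Finset.mul_sum]
  refine Finset.sum_congr rfl fun p hp ↦ ?_
  obtain ⟨rfl, hn⟩ := Nat.mem_divisorsAntidiagonal.mp hp
  rw [hχ (left_ne_zero_of_mul hn) (right_ne_zero_of_mul hn)]
  exact mul_mul_mul_comm ..

lemma LSeriesSummable.mul_of_norm_le_one (hχ : ∀ n, ‖χ n‖ ≤ 1) {f : ℕ → ℂ} {s : ℂ}
    (hf : LSeriesSummable f s) : LSeriesSummable (χ * f) s :=
  .of_norm <| hf.norm.of_nonneg_of_le (fun _ ↦ norm_nonneg _) fun n ↦ norm_term_le s <| by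
    simpa using mul_le_of_le_one_left (norm_nonneg (f n)) (hχ n)

lemma LSeries.const_one_convolution_moebius : (1 : ℕ → ℂ) ⍟ ↗μ = δ := by
  rw [one_convolution_eq_zeta_convolution, ← one_eq_delta]
  simp_rw [← natCoe_apply, ← intCoe_apply, ArithmeticFunction.coe_mul, coe_zeta_mul_coe_moebius]

lemma LSeries_mul_LSeries_mul_moebius_eq_one
    (hχ : ∀ {a b : ℕ}, a ≠ 0 → b ≠ 0 → χ (a * b) = χ a * χ b) (hχ1 : χ 1 = 1)
    (hχle : ∀ n, ‖χ n‖ ≤ 1) {s : ℂ} (hs : 1 < s.re) :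
    L χ s * L (χ * ↗μ) s = 1 := by
  rw [← LSeries_convolution' (LSeriesSummable_of_bounded_of_one_lt_re (fun n _ ↦ hχle n) hs)
    ((LSeriesSummable_moebius_iff.mpr hs).mul_of_norm_le_one hχle)]
  nth_rewrite 1 [← mul_one χ]
  rw [mul_convolution_distrib_of_map_mul hχ, const_one_convolution_moebius, mul_delta hχ1,
    LSeries_delta, Pi.one_apply]

lemma LSeriesSummable_log {s : ℂ} (hs : 1 < s.re) : LSeriesSummable ↗Complex.log s := by
  have h := LSeriesSummable_logMul_of_lt_re (f := 1)
    (by rw [LSeries.abscissaOfAbsConv_one]; exact_mod_cast hs)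
  convert h using 1
  ext n
  simp [logMul]

lemma LSeries_mul_vonMangoldt_eq_div
    (hχ : ∀ {a b : ℕ}, a ≠ 0 → b ≠ 0 → χ (a * b) = χ a * χ b) (hχ1 : χ 1 = 1)
    (hχle : ∀ n, ‖χ n‖ ≤ 1) {s : ℂ} (hs : 1 < s.re) :
    L (χ * ↗Λ) s = L (χ * ↗Complex.log) s / L χ s := by
  have hχs : LSeriesSummable χ s := LSeriesSummable_of_bounded_of_one_lt_re (fun n _ ↦ hχle n) hs
  have hΛs : LSeriesSummable (χ * ↗Λ) s :=
    (LSeriesSummable_vonMangoldt hs).mul_of_norm_le_one hχle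
  have hconv : (χ * ↗Λ) ⍟ χ = χ * ↗Complex.log := by
    nth_rewrite 2 [← mul_one χ]
    rw [mul_convolution_distrib_of_map_mul hχ, convolution_vonMangoldt_const_one]
  have hχ0 : L χ s ≠ 0 :=
    left_ne_zero_of_mul_eq_one (LSeries_mul_LSeries_mul_moebius_eq_one hχ hχ1 hχle hs)
  rw [eq_div_iff hχ0, ← LSeries_convolution' hΛs hχs, hconv]

end Twist

lemma self_le_pprime (j : ℕ) : j ≤ pprime j :=
  (Nat.nth_strictMono Nat.infinite_setOfPred_prime).le_apply

lemma expOf_eq_zero_of_lt {n j : ℕ} (h : n < j) : expOf n j = 0 :=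
  Nat.factorization_eq_zero_of_lt (h.trans_le (self_le_pprime j))

lemma tpow_eq_prod_range (t : Torus) {n N : ℕ} (h : n ≤ N) :
    tpow t n = ∏ j ∈ range (N + 1), (t j : ℂ) ^ expOf n j := by
  refine finprod_eq_prod_of_mulSupport_subset _ fun j hj ↦ ?_
  by_contra hjN
  simp only [coe_range, Set.mem_Iio, not_lt] at hjN
  exact hj (by simp [expOf_eq_zero_of_lt (show n < j by omega)])

lemma norm_tpow (t : Torus) (n : ℕ) : ‖tpow t n‖ = 1 := by
  simp [tpow_eq_prod_range t le_rfl, norm_prod, Circle.norm_coe]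

lemma tpow_ne_zero (t : Torus) (n : ℕ) : tpow t n ≠ 0 :=
  norm_ne_zero_iff.mp (by simp [norm_tpow])

lemma tpow_one (t : Torus) : tpow t 1 = 1 := by
  simp [tpow, expOf]

lemma tpow_mul (t : Torus) {a b : ℕ} (ha : a ≠ 0) (hb : b ≠ 0) :
    tpow t (a * b) = tpow t a * tpow t b := by
  have hab : a ≤ a * b ∧ b ≤ a * b := ⟨Nat.le_mul_of_pos_right a (by omega),
    Nat.le_mul_of_pos_left b (by omega)⟩
  rw [tpow_eq_prod_range t le_rfl, tpow_eq_prod_range t hab.1, tpow_eq_prod_range t hab.2,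
    ← prod_mul_distrib]
  simp [expOf, Nat.factorization_mul ha hb, pow_add]

lemma tpow_mul_left (g t : Torus) (n : ℕ) : tpow (g * t) n = tpow g n * tpow t n := by
  simp [tpow_eq_prod_range _ le_rfl, ← prod_mul_distrib, mul_pow]

lemma tpow_mulSingle (j : ℕ) (z : Circle) (n : ℕ) :
    tpow (Pi.mulSingle j z) n = (z : ℂ) ^ expOf n j := by
  rw [tpow, finprod_eq_single _ j fun i hi ↦ by simp [Pi.mulSingle_eq_of_ne hi]]
  simp

lemma continuous_tpow (n : ℕ) : Continuous fun t : Torus ↦ tpow t n := by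
  simp only [tpow_eq_prod_range _ le_rfl]
  fun_prop

lemma Circle.exists_pow_ne_pow {a b : ℕ} (hab : a ≠ b) : ∃ z : Circle, z ^ a ≠ z ^ b := by
  set k : ℤ := a - b
  have hk : (k : ℝ) ≠ 0 := Int.cast_ne_zero.mpr (sub_ne_zero.mpr (by exact_mod_cast hab))
  refine ⟨Circle.exp (Real.pi / k), fun h ↦ Circle.exp_pi_ne_one ?_⟩
  rw [← mul_div_cancel₀ Real.pi hk, Circle.exp_intCast_mul, zpow_sub, zpow_natCast, zpow_natCast,
    h, mul_inv_cancel]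

lemma exists_tpow_ne_tpow {m n : ℕ} (hm : m ≠ 0) (hn : n ≠ 0) (hmn : m ≠ n) :
    ∃ g : Torus, tpow g m ≠ tpow g n := by
  obtain ⟨p, hp⟩ : ∃ p, m.factorization p ≠ n.factorization p := by
    by_contra! h
    exact hmn (Nat.factorization_inj hm hn (Finsupp.ext h))
  have hpp : p.Prime := by
    by_contra hnp
    simp [Nat.factorization_eq_zero_of_not_prime _ hnp] at hp
  have hj : pprime (Nat.count Nat.Prime p) = p := Nat.nth_count hpp
  obtain ⟨z, hz⟩ := Circle.exists_pow_ne_pow (a := expOf m (Nat.count Nat.Prime p))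
    (b := expOf n (Nat.count Nat.Prime p)) (by simpa [expOf, hj] using hp)
  refine ⟨Pi.mulSingle (Nat.count Nat.Prime p) z, ?_⟩
  rw [tpow_mulSingle, tpow_mulSingle, ← Circle.coe_pow, ← Circle.coe_pow]
  exact fun h ↦ hz (Circle.coe_injective h)

lemma integral_eq_zero_of_mul_left_eq_const_mul {G : Type*} [Group G] [MeasurableSpace G]
    [MeasurableMul G] {μ : Measure G} [μ.IsMulLeftInvariant] {f : G → ℂ} {g : G} {c : ℂ}
    (hc : c ≠ 1) (hf : ∀ x, f (g * x) = c * f x) :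
    ∫ x, f x ∂μ = 0 := by
  have h := integral_mul_left_eq_self (μ := μ) f g
  simp only [hf, integral_const_mul] at h
  by_contra hI
  exact hc ((mul_eq_right₀ hI).mp h)

lemma integral_tpow_mul_inv_tpow (ν : Measure Torus) [ν.IsMulLeftInvariant]
    [IsProbabilityMeasure ν] {m n : ℕ} (hm : m ≠ 0) (hn : n ≠ 0) :
    ∫ t, tpow t m * (tpow t n)⁻¹ ∂ν = if m = n then 1 else 0 := by
  split_ifs with hmn
  · simp [hmn, mul_inv_cancel₀ (tpow_ne_zero _ n)]
  obtain ⟨g, hg⟩ := exists_tpow_ne_tpow hm hn hmn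
  refine integral_eq_zero_of_mul_left_eq_const_mul (g := g)
    (mt (mul_inv_eq_one₀ (tpow_ne_zero g n)).mp hg) fun t ↦ ?_
  rw [tpow_mul_left, tpow_mul_left, mul_inv]
  ring

lemma integral_tsum_mul_of_norm_le_one {α ι : Type*} [MeasurableSpace α] [Countable ι]
    {μ : Measure α} [IsFiniteMeasure μ] {c : ι → ℂ} {e : ι → α → ℂ}
    (hc : Summable fun i ↦ ‖c i‖) (he : ∀ i, AEStronglyMeasurable (e i) μ)
    (he1 : ∀ i x, ‖e i x‖ ≤ 1) :
    ∫ x, ∑' i, c i * e i x ∂μ = ∑' i, c i * ∫ x, e i x ∂μ := by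
  have hbound : ∀ i x, ‖c i * e i x‖ ≤ ‖c i‖ := fun i x ↦ by
    simpa [norm_mul] using mul_le_of_le_one_right (norm_nonneg (c i)) (he1 i x)
  simp_rw [← integral_const_mul]
  exact (hasSum_integral_of_dominated_convergence (fun i _ ↦ ‖c i‖)
    (fun i ↦ (he i).const_mul (c i)) (fun i ↦ .of_forall (hbound i)) (.of_forall fun _ ↦ hc)
    (integrable_const _)
    (.of_forall fun x ↦ (hc.of_norm_bounded fun i ↦ hbound i x).hasSum)).tsum_eq.symm

lemma LSeries.term_mul_left (χ f : ℕ → ℂ) (s : ℂ) (n : ℕ) :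
    term (χ * f) s n = χ n * term f s n := by
  rcases eq_or_ne n 0 with rfl | hn
  · simp
  · simp [term_of_ne_zero hn, mul_div_assoc]

lemma tsum_rpow_neg_mul_eq_LSeries {f : ℕ → ℂ} {β : ℝ} (hf : LSeriesSummable f β) :
    ∑' m : ℕ, ((((m : ℝ) + 1) ^ (-β) : ℝ) : ℂ) * f (m + 1) = L f β := by
  rw [LSeries, hf.tsum_eq_zero_add, term_zero, zero_add]
  refine tsum_congr fun m ↦ ?_
  rw [term_of_ne_zero m.succ_ne_zero, Real.rpow_neg (by positivity), ofReal_inv,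
    ofReal_cpow (by positivity)]
  push_cast
  ring

lemma tsum_log_div_tsum_eq_LSeries {β : ℝ} (hβ : 1 < β) (t : Torus) :
    (∑' m : ℕ,
        Complex.ofReal (((m : ℝ) + 1) ^ (-β) * Real.log ((m : ℝ) + 1)) * tpow t (m + 1)) /
      (∑' m : ℕ, Complex.ofReal (((m : ℝ) + 1) ^ (-β)) * tpow t (m + 1)) =
      L (tpow t * ↗Λ) β := by
  have hs : 1 < (β : ℂ).re := by simpa using hβ
  have hle : ∀ n, ‖tpow t n‖ ≤ 1 := fun n ↦ (norm_tpow t n).le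
  rw [LSeries_mul_vonMangoldt_eq_div (tpow_mul t) (tpow_one t) hle hs,
    ← tsum_rpow_neg_mul_eq_LSeries (LSeriesSummable_of_bounded_of_one_lt_re (fun n _ ↦ hle n) hs),
    ← tsum_rpow_neg_mul_eq_LSeries ((LSeriesSummable_log hs).mul_of_norm_le_one hle)]
  congr 1
  refine tsum_congr fun m ↦ ?_
  simp only [Pi.mul_apply, ← natCast_log]
  push_cast
  ring

theorem vonMangoldt_integral_repr_general (β : ℝ) (hβ : 1 < β) (n : ℕ)
    (ν : Measure Torus) [ν.IsHaarMeasure] [IsProbabilityMeasure ν] :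
    ((ArithmeticFunction.vonMangoldt n : ℝ) : ℂ) =
      Complex.ofReal ((n : ℝ) ^ β) *
        ∫ t : Torus,
          (∑' m : ℕ,
              Complex.ofReal (((m : ℝ) + 1) ^ (-β) * Real.log ((m : ℝ) + 1)) * tpow t (m + 1)) /
            (∑' m : ℕ, Complex.ofReal (((m : ℝ) + 1) ^ (-β)) * tpow t (m + 1))
            * (tpow t n)⁻¹ ∂ν := by
  rcases eq_or_ne n 0 with rfl | hn
  · simp [Real.zero_rpow (by positivity : β ≠ 0)]
  have hs : 1 < (β : ℂ).re := by simpa using hβ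
  have hnβ : ((n : ℝ) ^ β : ℝ) = (n : ℂ) ^ (β : ℂ) := by
    rw [ofReal_cpow n.cast_nonneg, ofReal_natCast]
  calc ((Λ n : ℝ) : ℂ) = (n : ℂ) ^ (β : ℂ) * term ↗Λ β n := by
        rw [term_of_ne_zero hn, mul_div_cancel₀ _ (by simp [hn])]
    _ = (n : ℂ) ^ (β : ℂ) * ∑' m, term ↗Λ β m * ∫ t, tpow t m * (tpow t n)⁻¹ ∂ν := by
        rw [tsum_eq_single n fun m hm ↦ ?_]
        · rw [integral_tpow_mul_inv_tpow ν hn hn, if_pos rfl, mul_one]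
        rcases eq_or_ne m 0 with rfl | hm0
        · rw [term_zero, zero_mul]
        · rw [integral_tpow_mul_inv_tpow ν hm0 hn, if_neg hm, mul_zero]
    _ = (n : ℂ) ^ (β : ℂ) * ∫ t, ∑' m, term ↗Λ β m * (tpow t m * (tpow t n)⁻¹) ∂ν := by
        rw [integral_tsum_mul_of_norm_le_one (e := fun m t ↦ tpow t m * (tpow t n)⁻¹)
          (LSeriesSummable_vonMangoldt hs).norm (fun m ↦ ((continuous_tpow m).mul
            ((continuous_tpow n).inv₀ (tpow_ne_zero · n))).aestronglyMeasurable)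
          (fun m t ↦ by simp [norm_tpow])]
    _ = _ := by
        rw [hnβ]
        congr 1
        refine integral_congr_ae (.of_forall fun t ↦ ?_)
        simp only [tsum_log_div_tsum_eq_LSeries hβ t, LSeries, ← tsum_mul_right, term_mul_left]
        exact tsum_congr fun m ↦ by ring

/-- For every real `β > 1` and every positive integer `n`, the von Mangoldt function satisfies
`Λ(n) = n^β ∫_{𝕋^ω} (∑_{m=1}^∞ m^{-β} (log m) t^{α(m)}) / (∑_{m=1}^∞ m^{-β} t^{α(m)}) · t^{-α(n)} dt`,
where `dt` is the normalized Haar measure on `𝕋^ω` and `t^{-α(n)} = (t^{α(n)})⁻¹`. -/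
theorem vonMangoldt_integral_repr (β : ℝ) (hβ : 1 < β) (n : ℕ) (hn : 1 ≤ n)
    (ν : Measure Torus) [ν.IsHaarMeasure] [IsProbabilityMeasure ν] :
    ((ArithmeticFunction.vonMangoldt n : ℝ) : ℂ) =
      Complex.ofReal ((n : ℝ) ^ β) *
        ∫ t : Torus,
          (∑' m : ℕ,
              Complex.ofReal (((m : ℝ) + 1) ^ (-β) * Real.log ((m : ℝ) + 1)) * tpow t (m + 1)) /
            (∑' m : ℕ, Complex.ofReal (((m : ℝ) + 1) ^ (-β)) * tpow t (m + 1))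
            * (tpow t n)⁻¹ ∂ν :=
  vonMangoldt_integral_repr_general β hβ n ν
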